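/- Let A and B be two finite multisets in ℤ_p that are weakly equivalent, and suppose that A is p-adic non-Liouville. Then there exist Liouville partitions A_1, A_2 of A and B_1, B_2 of B such that: (a) the multisets A_1 and B_1 consist entirely of integers; and (b) the multisets A_2 and B_2 are weakly equivalent and contain no integers and no p-adic Liouville numbers. In particular, B is also p-adic non-Liouville. -/

import Mathlib

open Filter

/-- `padicDist p m a` is `d_m(a) = min {|h| : h ∈ ℤ, a ≡ h (mod p^m ℤ_p)}`. -/
noncomputable def padicDist (p : ℕ) [Fact p.Prime] (m : ℕ) (a : ℤ_[p]) : ℕ :=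
  sInf {k : ℕ | ∃ h : ℤ, h.natAbs = k ∧ (p : ℤ_[p]) ^ m ∣ a - (h : ℤ_[p])}

/-- `a ∈ ℤ_p` is a p-adic Liouville number if `a ∉ ℤ` and
`liminf_{m→∞} d_m(a)/m < +∞`. -/
def IsPadicLiouville (p : ℕ) [Fact p.Prime] (a : ℤ_[p]) : Prop :=
  (∀ n : ℤ, a ≠ (n : ℤ_[p])) ∧
    liminf (fun m : ℕ => (((padicDist p m a : ℝ) / (m : ℝ)) : EReal)) atTop < (⊤ : EReal)

/-- Two finite multisets in `ℤ_p` are weakly equivalent: there exist orderings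
`a_1,…,a_n`, `b_1,…,b_n`, a constant `c > 0`, and for each `m ≥ 1` a permutation `σ_m`
with `d_m(a_{σ_m i} - b_i) ≤ c m`. -/
def WeaklyEquivalent (p : ℕ) [Fact p.Prime] (A B : Multiset ℤ_[p]) : Prop :=
  ∃ (n : ℕ) (a b : Fin n → ℤ_[p]) (c : ℝ),
    A = ↑(List.ofFn a) ∧ B = ↑(List.ofFn b) ∧ 0 < c ∧
    ∀ m : ℕ, 1 ≤ m → ∃ σ : Equiv.Perm (Fin n),
      ∀ i, (padicDist p m (a (σ i) - b i) : ℝ) ≤ c * m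

/-- Two finite multisets in `ℤ_p` are equivalent: there exist orderings with
`a_i - b_i ∈ ℤ` for all `i`. -/
def EquivalentMultisets (p : ℕ) [Fact p.Prime] (A B : Multiset ℤ_[p]) : Prop :=
  ∃ (n : ℕ) (a b : Fin n → ℤ_[p]),
    A = ↑(List.ofFn a) ∧ B = ↑(List.ofFn b) ∧
    ∀ i, ∃ k : ℤ, a i - b i = (k : ℤ_[p])

/-- `P 0, …, P (k-1)` form a Liouville partition of `A`: their multiset union is `A` and
no two elements of distinct parts differ by an integer or a p-adic Liouville number. -/
def IsLiouvillePartition (p : ℕ) [Fact p.Prime] (A : Multiset ℤ_[p]) {k : ℕ}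
    (P : Fin k → Multiset ℤ_[p]) : Prop :=
  (∑ g, P g) = A ∧
    ∀ g h : Fin k, g ≠ h → ∀ x ∈ P g, ∀ y ∈ P h,
      ¬ ((∃ n : ℤ, x - y = (n : ℤ_[p])) ∨ IsPadicLiouville p (x - y))

/-- A multiset is p-adic non-Liouville if it contains no p-adic Liouville number. -/
def PadicNonLiouvilleMultiset (p : ℕ) [Fact p.Prime] (A : Multiset ℤ_[p]) : Prop :=
  ∀ a ∈ A, ¬ IsPadicLiouville p a

/-- The difference multiset `A - A = {a - a' : a, a' ∈ A}`. -/
noncomputable def diffMultiset (p : ℕ) [Fact p.Prime] (A : Multiset ℤ_[p]) : Multiset ℤ_[p] :=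
  A.bind fun x => A.map fun y => x - y

/-!
At scale `m`, `b_i` is matched with `a_{σ_m i}`. Each `a_j` is either an integer, with
`d_m(a_j)` bounded, or satisfies `d_m(a_j)/m → ∞`. Fix `i`. Whenever `b_i` is matched at scale
`m` with an integer, `d_m(b_i)` is linear in `m`; if it is then matched at scale `m + 1` with a
non-integer `a_j`, the triangle inequality makes `d_m(a_j)` linear in `m`, which can happen only
finitely often. So eventually `b_i` is matched only with integers, and then `b_i ∈ ℤ`, or only
with non-integers, and then `d_m(b_i)/m → ∞`. Hence `B` is non-Liouville, and for large `m` the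
matching `σ_m` respects the split of `A` and `B` into integers and non-integers.
-/

section PadicDist

variable {p : ℕ} [Fact p.Prime]

theorem exists_padicDist_eq (m : ℕ) (x : ℤ_[p]) :
    ∃ h : ℤ, h.natAbs = padicDist p m x ∧ (p : ℤ_[p]) ^ m ∣ x - h := by
  refine Nat.sInf_mem (s := {k : ℕ | ∃ h : ℤ, h.natAbs = k ∧ (p : ℤ_[p]) ^ m ∣ x - h})
    ⟨x.appr m, x.appr m, by simp, ?_⟩
  simpa [Ideal.mem_span_singleton] using x.appr_spec m

theorem padicDist_le_natAbs {m : ℕ} {x : ℤ_[p]} {h : ℤ} (hx : (p : ℤ_[p]) ^ m ∣ x - h) :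
    padicDist p m x ≤ h.natAbs :=
  Nat.sInf_le ⟨h, rfl, hx⟩

theorem padicDist_lt_pow (m : ℕ) (x : ℤ_[p]) : padicDist p m x < p ^ m := by
  have hx : (p : ℤ_[p]) ^ m ∣ x - ((x.appr m : ℤ) : ℤ_[p]) := by
    simpa [Ideal.mem_span_singleton] using x.appr_spec m
  exact (padicDist_le_natAbs hx).trans_lt (by simpa using x.appr_lt m)

theorem padicDist_intCast_le (m : ℕ) (k : ℤ) : padicDist p m (k : ℤ_[p]) ≤ k.natAbs :=
  padicDist_le_natAbs (by simp)

theorem padicDist_mono (x : ℤ_[p]) {m m' : ℕ} (hm : m ≤ m') :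
    padicDist p m x ≤ padicDist p m' x := by
  obtain ⟨h, hh, hx⟩ := exists_padicDist_eq m' x
  exact hh ▸ padicDist_le_natAbs ((pow_dvd_pow _ hm).trans hx)

theorem padicDist_add_le (m : ℕ) (x y : ℤ_[p]) :
    padicDist p m (x + y) ≤ padicDist p m x + padicDist p m y := by
  obtain ⟨h, hh, hx⟩ := exists_padicDist_eq m x
  obtain ⟨k, hk, hy⟩ := exists_padicDist_eq m y
  rw [← hh, ← hk]
  calc padicDist p m (x + y) ≤ (h + k).natAbs :=
        padicDist_le_natAbs (by convert dvd_add hx hy using 1; push_cast; ring)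
    _ ≤ h.natAbs + k.natAbs := Int.natAbs_add_le h k

theorem padicDist_neg (m : ℕ) (x : ℤ_[p]) : padicDist p m (-x) = padicDist p m x := by
  have key (z : ℤ_[p]) : padicDist p m (-z) ≤ padicDist p m z := by
    obtain ⟨h, hh, hz⟩ := exists_padicDist_eq m z
    rw [← hh, ← Int.natAbs_neg]
    exact padicDist_le_natAbs (by convert hz.neg_right using 1; push_cast; ring)
  exact le_antisymm (key x) (by simpa using key (-x))

theorem padicDist_sub_comm (m : ℕ) (x y : ℤ_[p]) :
    padicDist p m (x - y) = padicDist p m (y - x) := by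
  rw [← padicDist_neg, neg_sub]

theorem padicDist_le_sub_add (m : ℕ) (x y : ℤ_[p]) :
    padicDist p m x ≤ padicDist p m (x - y) + padicDist p m y := by
  simpa using padicDist_add_le m (x - y) y

end PadicDist

theorem eventually_mul_lt_pow (K : ℝ) {r : ℝ} (hr : 1 < r) :
    ∀ᶠ m : ℕ in atTop, K * m < r ^ m := by
  have hlim := (tendsto_pow_const_div_const_pow_of_one_lt 1 hr).const_mul (|K| + 1)
  rw [mul_zero] at hlim
  filter_upwards [hlim.eventually (gt_mem_nhds zero_lt_one)] with m hm
  have hpow : 0 < r ^ m := pow_pos (zero_lt_one.trans hr) m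
  rw [pow_one, mul_div_assoc', div_lt_one hpow] at hm
  nlinarith [le_abs_self K, (m.cast_nonneg : (0 : ℝ) ≤ m)]

section Rigidity

variable {p : ℕ} [Fact p.Prime]

theorem PadicInt.eq_of_eventually_pow_dvd_sub {x y : ℤ_[p]}
    (h : ∀ᶠ m in atTop, (p : ℤ_[p]) ^ m ∣ x - y) : x = y := by
  refine PadicInt.ext_of_toZModPow.mp fun n => ?_
  obtain ⟨m, hm, hnm⟩ := (h.and (eventually_ge_atTop n)).exists
  rw [← sub_eq_zero, ← map_sub, ← RingHom.mem_ker, PadicInt.ker_toZModPow,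
    Ideal.mem_span_singleton]
  exact (pow_dvd_pow _ hnm).trans hm

/-- Integers `h_m` realising `d_m(x) = |h_m|` agree with each other modulo `p^m`, so once
`|h_{m+1} - h_m| < p^m` they are equal; they then stabilise at an integer equal to `x`. -/
theorem exists_intCast_eq_of_eventually_padicDist_le {x : ℤ_[p]} {C : ℝ}
    (hx : ∀ᶠ m in atTop, (padicDist p m x : ℝ) ≤ C * m) : ∃ k : ℤ, x = k := by
  choose h hh hdvd using fun m => exists_padicDist_eq (p := p) m x
  have hp : (1 : ℝ) < p := by exact_mod_cast (Fact.out : p.Prime).one_lt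
  have hstep : ∀ᶠ m in atTop, h (m + 1) = h m := by
    filter_upwards [hx, (tendsto_add_atTop_nat 1).eventually hx,
      eventually_mul_lt_pow (3 * |C|) hp, eventually_ge_atTop 1] with m hm hm1 hpow hm0
    have hdiff : (p : ℤ_[p]) ^ m ∣ ((h (m + 1) - h m : ℤ) : ℤ_[p]) := by
      convert dvd_sub (hdvd m) ((pow_dvd_pow _ m.le_succ).trans (hdvd (m + 1))) using 1
      push_cast; ring
    rw [PadicInt.pow_p_dvd_int_iff] at hdiff
    refine sub_eq_zero.mp (Int.eq_zero_of_abs_lt_dvd hdiff ?_)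
    have hsum : |((h (m + 1) : ℤ) : ℝ) - h m| ≤ C * (m + 1 : ℕ) + C * m := by
      refine (abs_sub ((h (m + 1) : ℤ) : ℝ) (h m)).trans (add_le_add ?_ ?_)
      · rwa [← Int.cast_abs, ← Int.natCast_natAbs, hh, Int.cast_natCast]
      · rwa [← Int.cast_abs, ← Int.natCast_natAbs, hh, Int.cast_natCast]
    have hm0' : (1 : ℝ) ≤ m := by exact_mod_cast hm0
    have : |((h (m + 1) - h m : ℤ) : ℝ)| < (p : ℝ) ^ m := by
      push_cast at hsum ⊢
      nlinarith [le_abs_self C, abs_nonneg C]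
    exact_mod_cast this
  obtain ⟨M, hM⟩ := eventually_atTop.mp hstep
  have hconst : ∀ m, M ≤ m → h m = h M := fun m hm => by
    induction m, hm using Nat.le_induction with
    | base => rfl
    | succ m hm ih => rw [hM m hm, ih]
  refine ⟨h M, PadicInt.eq_of_eventually_pow_dvd_sub ?_⟩
  filter_upwards [eventually_ge_atTop M] with m hm
  simpa [hconst m hm] using hdvd m

end Rigidity

def PadicDistSuperlinear (p : ℕ) [Fact p.Prime] (x : ℤ_[p]) : Prop :=
  ∀ C : ℝ, ∀ᶠ m in atTop, C * m < padicDist p m x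

section Liouville

variable {p : ℕ} [Fact p.Prime]

theorem isPadicLiouville_iff {x : ℤ_[p]} :
    IsPadicLiouville p x ↔
      (∀ n : ℤ, x ≠ n) ∧ ∃ C : ℝ, ∃ᶠ m in atTop, (padicDist p m x : ℝ) ≤ C * m := by
  refine and_congr_right fun _ => ⟨fun hlt => ?_, fun ⟨C, hC⟩ => ?_⟩
  · obtain ⟨C, hC, -⟩ := EReal.lt_iff_exists_real_btwn.mp hlt
    refine ⟨C, ((frequently_lt_of_liminf_lt (by isBoundedDefault) hC).and_eventually
      (eventually_gt_atTop 0)).mono fun m ⟨hm, hm0⟩ => ?_⟩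
    rw [← EReal.coe_div, EReal.coe_lt_coe_iff, div_lt_iff₀ (by exact_mod_cast hm0)] at hm
    exact hm.le
  · refine lt_of_le_of_lt (liminf_le_of_frequently_le' ((hC.and_eventually
      (eventually_gt_atTop 0)).mono fun m ⟨hm, hm0⟩ => ?_)) (EReal.coe_lt_top C)
    rw [← EReal.coe_div, EReal.coe_le_coe_iff, div_le_iff₀ (by exact_mod_cast hm0)]
    exact hm

theorem not_isPadicLiouville_iff {x : ℤ_[p]} :
    ¬ IsPadicLiouville p x ↔ (∃ n : ℤ, x = n) ∨ PadicDistSuperlinear p x := by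
  simp only [isPadicLiouville_iff, PadicDistSuperlinear, not_and_or, not_forall, not_not,
    not_exists, not_frequently, not_le]

theorem PadicDistSuperlinear.ne_intCast {x : ℤ_[p]} (hx : PadicDistSuperlinear p x) (k : ℤ) :
    x ≠ k := by
  rintro rfl
  obtain ⟨m, hm, hm1⟩ := ((hx k.natAbs).and (eventually_ge_atTop 1)).exists
  have hm1' : (1 : ℝ) ≤ m := by exact_mod_cast hm1
  have hk : (padicDist p m (k : ℤ_[p]) : ℝ) ≤ k.natAbs := by
    exact_mod_cast padicDist_intCast_le m k
  nlinarith [(k.natAbs.cast_nonneg : (0 : ℝ) ≤ k.natAbs)]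

theorem PadicDistSuperlinear.not_isPadicLiouville {x : ℤ_[p]} (hx : PadicDistSuperlinear p x) :
    ¬ IsPadicLiouville p x :=
  not_isPadicLiouville_iff.mpr (Or.inr hx)

theorem IsPadicLiouville.neg {x : ℤ_[p]} (hx : IsPadicLiouville p x) :
    IsPadicLiouville p (-x) := by
  rw [isPadicLiouville_iff] at hx ⊢
  refine ⟨fun k hk => hx.1 (-k) (by rw [Int.cast_neg, ← hk, neg_neg]), ?_⟩
  simpa only [padicDist_neg] using hx.2

theorem IsPadicLiouville.add_intCast {x : ℤ_[p]} (hx : IsPadicLiouville p x) (k : ℤ) :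
    IsPadicLiouville p (x + k) := by
  rw [isPadicLiouville_iff] at hx ⊢
  obtain ⟨hx, C, hC⟩ := hx
  refine ⟨fun j hj => hx (j - k) (by rw [Int.cast_sub, ← hj, add_sub_cancel_right]),
    C + k.natAbs, (hC.and_eventually (eventually_ge_atTop 1)).mono fun m ⟨hm, hm1⟩ => ?_⟩
  have hm1' : (1 : ℝ) ≤ m := by exact_mod_cast hm1
  have hd : (padicDist p m (x + k) : ℝ) ≤ padicDist p m x + k.natAbs := by
    exact_mod_cast (padicDist_add_le m x k).trans (Nat.add_le_add_left (padicDist_intCast_le m k) _)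
  nlinarith [(k.natAbs.cast_nonneg : (0 : ℝ) ≤ k.natAbs)]

end Liouville

section Partition

variable {p : ℕ} [Fact p.Prime]

theorem not_int_or_isPadicLiouville_sub_intCast {x : ℤ_[p]} (hx : ¬ ∃ n : ℤ, x = n)
    (hxL : ¬ IsPadicLiouville p x) (k : ℤ) :
    ¬ ((∃ n : ℤ, x - k = n) ∨ IsPadicLiouville p (x - k)) ∧
      ¬ ((∃ n : ℤ, k - x = n) ∨ IsPadicLiouville p (k - x)) := by
  refine ⟨?_, ?_⟩ <;> rintro (⟨n, hn⟩ | hL)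
  · exact hx ⟨n + k, by push_cast; linear_combination hn⟩
  · exact hxL (by simpa using hL.add_intCast k)
  · exact hx ⟨k - n, by push_cast; linear_combination -hn⟩
  · exact hxL (by simpa using hL.neg.add_intCast k)

theorem isLiouvillePartition_filter_int (A : Multiset ℤ_[p])
    [DecidablePred fun x : ℤ_[p] => ∃ n : ℤ, x = n] (hA : PadicNonLiouvilleMultiset p A) :
    IsLiouvillePartition p A
      ![A.filter fun x => ∃ n : ℤ, x = n, A.filter fun x => ¬ ∃ n : ℤ, x = n] := by
  refine ⟨by simp [Fin.sum_univ_two, Multiset.filter_add_not], fun g h hgh x hx y hy => ?_⟩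
  fin_cases g <;> fin_cases h <;> simp only [Fin.zero_eta, Fin.mk_one, Matrix.cons_val_zero,
    Matrix.cons_val_one, Multiset.mem_filter] at hx hy
  · exact absurd rfl hgh
  · obtain ⟨k, rfl⟩ := hx.2
    exact (not_int_or_isPadicLiouville_sub_intCast hy.2 (hA y hy.1) k).2
  · obtain ⟨k, rfl⟩ := hy.2
    exact (not_int_or_isPadicLiouville_sub_intCast hx.2 (hA x hx.1) k).1
  · exact absurd rfl hgh

end Partition

section WeakEquivalence

variable {p : ℕ} [Fact p.Prime]

theorem Multiset.filter_ofFn_eq_map_univ {α : Type*} {n : ℕ} (a : Fin n → α) (P : α → Prop)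
    [DecidablePred P] :
    (↑(List.ofFn a) : Multiset α).filter P = Finset.univ.val.map fun j : {j // P (a j)} => a j := by
  rw [← Fin.univ_val_map, Multiset.filter_map, ← Finset.filter_val,
    ← Finset.univ_val_map_subtype_restrict]
  rfl

theorem weaklyEquivalent_of_eventually {ι κ : Type*} [Fintype ι] [Fintype κ]
    (a : κ → ℤ_[p]) (b : ι → ℤ_[p]) {c : ℝ}
    (h : ∀ᶠ m in atTop, ∃ σ : ι ≃ κ, ∀ i, (padicDist p m (a (σ i) - b i) : ℝ) ≤ c * m) :
    WeaklyEquivalent p (Finset.univ.val.map a) (Finset.univ.val.map b) := by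
  obtain ⟨M, hM⟩ := eventually_atTop.mp h
  obtain ⟨σ₀, -⟩ := hM M le_rfl
  set e := Fintype.equivFin ι
  set c' : ℝ := max (max c 1) ((p : ℝ) ^ M)
  refine ⟨Fintype.card ι, a ∘ σ₀ ∘ e.symm, b ∘ e.symm, c', ?_, ?_,
    lt_max_of_lt_left (lt_max_of_lt_right one_pos), fun m hm => ?_⟩
  · rw [← Fin.univ_val_map, ← Multiset.map_map, ← Multiset.map_map,
      Multiset.map_univ_val_equiv, Multiset.map_univ_val_equiv]
  · rw [← Fin.univ_val_map, ← Multiset.map_map, Multiset.map_univ_val_equiv]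
  by_cases hMm : M ≤ m
  · obtain ⟨σ, hσ⟩ := hM m hMm
    refine ⟨e.symm.trans (σ.trans (σ₀.symm.trans e)), fun i => ?_⟩
    have hc : c ≤ c' := (le_max_left _ _).trans (le_max_left _ _)
    simpa using (hσ (e.symm i)).trans (mul_le_mul_of_nonneg_right hc m.cast_nonneg)
  · refine ⟨1, fun i => ?_⟩
    have hp : (1 : ℝ) ≤ p := by exact_mod_cast (Fact.out : p.Prime).one_lt.le
    calc (padicDist p m _ : ℝ) ≤ (p : ℝ) ^ m := by exact_mod_cast (padicDist_lt_pow m _).le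
      _ ≤ (p : ℝ) ^ M := pow_le_pow_right₀ hp (by omega)
      _ ≤ c' * 1 := by rw [mul_one]; exact le_max_right _ _
      _ ≤ c' * m := by gcongr; exact_mod_cast hm

end WeakEquivalence

theorem Filter.eventually_or_eventually_not_of_eventually_imp_succ {P : ℕ → Prop}
    (h : ∀ᶠ m in atTop, P m → P (m + 1)) : (∀ᶠ m in atTop, P m) ∨ ∀ᶠ m in atTop, ¬ P m := by
  obtain ⟨M, hM⟩ := eventually_atTop.mp h
  by_cases hP : ∃ m ≥ M, P m
  · obtain ⟨m₀, hm₀, hP₀⟩ := hP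
    refine Or.inl (eventually_atTop.mpr ⟨m₀, fun m hm => ?_⟩)
    induction m, hm using Nat.le_induction with
    | base => exact hP₀
    | succ m hm ih => exact hM m (hm₀.trans hm) ih
  · exact Or.inr (eventually_atTop.mpr ⟨M, fun m hm hPm => hP ⟨m, hm, hPm⟩⟩)

section Matching

variable {p : ℕ} [Fact p.Prime] {κ : Type*} [Finite κ]

theorem exists_padicDist_le_of_intCast (a : κ → ℤ_[p]) :
    ∃ N : ℕ, ∀ j, (∃ n : ℤ, a j = n) → ∀ m, padicDist p m (a j) ≤ N := by
  have (j : κ) : ∃ N : ℕ, (∃ n : ℤ, a j = n) → ∀ m, padicDist p m (a j) ≤ N := by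
    by_cases hj : ∃ n : ℤ, a j = n
    · obtain ⟨n, hn⟩ := hj
      exact ⟨n.natAbs, fun _ m => hn ▸ padicDist_intCast_le m n⟩
    · exact ⟨0, fun h => absurd h hj⟩
  choose N hN using this
  obtain ⟨N₀, hN₀⟩ := (Set.finite_range N).bddAbove
  exact ⟨N₀, fun j hj m => (hN j hj m).trans (hN₀ ⟨j, rfl⟩)⟩

theorem eventually_forall_lt_padicDist {a : κ → ℤ_[p]} (ha : ∀ j, ¬ IsPadicLiouville p (a j))
    (C : ℝ) : ∀ᶠ m in atTop, ∀ j, (¬ ∃ n : ℤ, a j = n) → C * m < padicDist p m (a j) := by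
  refine eventually_all.mpr fun j => ?_
  by_cases hj : ∃ n : ℤ, a j = n
  · exact Eventually.of_forall fun _ h => absurd hj h
  · exact ((not_isPadicLiouville_iff.mp (ha j)).resolve_left hj C).mono fun _ h _ => h

theorem not_isPadicLiouville_and_eventually_int_iff {a : κ → ℤ_[p]}
    (ha : ∀ j, ¬ IsPadicLiouville p (a j)) {x : ℤ_[p]} {j : ℕ → κ} {c : ℝ}
    (hj : ∀ᶠ m in atTop, (padicDist p m (a (j m) - x) : ℝ) ≤ c * m) :
    ¬ IsPadicLiouville p x ∧ ∀ᶠ m in atTop, ((∃ n : ℤ, x = n) ↔ ∃ n : ℤ, a (j m) = n) := by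
  obtain ⟨N, hN⟩ := exists_padicDist_le_of_intCast (p := p) a
  have hU : ∀ᶠ m in atTop, (∃ n : ℤ, a (j m) = n) → (padicDist p m x : ℝ) ≤ (c + N) * m := by
    filter_upwards [hj, eventually_ge_atTop 1] with m hm hm1 hint
    have hm1' : (1 : ℝ) ≤ m := by exact_mod_cast hm1
    have htri : (padicDist p m x : ℝ) ≤ padicDist p m (a (j m) - x) + padicDist p m (a (j m)) := by
      exact_mod_cast padicDist_sub_comm m x (a (j m)) ▸ padicDist_le_sub_add m x (a (j m))
    have hNm : (padicDist p m (a (j m)) : ℝ) ≤ N := by exact_mod_cast hN _ hint m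
    nlinarith [(N.cast_nonneg : (0 : ℝ) ≤ N)]
  have hsucc : ∀ᶠ m in atTop, (∃ n : ℤ, a (j m) = n) → ∃ n : ℤ, a (j (m + 1)) = n := by
    filter_upwards [hU, (tendsto_add_atTop_nat 1).eventually hj, eventually_ge_atTop 1,
      eventually_forall_lt_padicDist ha (2 * c + N + |c|)] with m hm hm' hm1 hlt hint
    by_contra hnot
    have hm1' : (1 : ℝ) ≤ m := by exact_mod_cast hm1
    have htri : (padicDist p m (a (j (m + 1))) : ℝ) ≤
        padicDist p (m + 1) (a (j (m + 1)) - x) + padicDist p m x := by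
      exact_mod_cast (padicDist_le_sub_add m (a (j (m + 1))) x).trans
        (Nat.add_le_add_right (padicDist_mono _ (by omega)) _)
    push_cast at hm'
    nlinarith [hlt _ hnot, hm hint, le_abs_self c, mul_le_mul_of_nonneg_left hm1' (abs_nonneg c)]
  rcases eventually_or_eventually_not_of_eventually_imp_succ hsucc with hint | hnint
  · obtain ⟨k, rfl⟩ := exists_intCast_eq_of_eventually_padicDist_le
      ((hint.and hU).mono fun m h => h.2 h.1)
    exact ⟨fun hL => hL.1 k rfl, hint.mono fun m h => iff_of_true ⟨k, rfl⟩ h⟩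
  · have hx : PadicDistSuperlinear p x := fun C => by
      filter_upwards [hj, hnint, eventually_forall_lt_padicDist ha (C + c)] with m hm hm' hlt
      have htri : (padicDist p m (a (j m)) : ℝ) ≤
          padicDist p m (a (j m) - x) + padicDist p m x := by
        exact_mod_cast padicDist_le_sub_add m (a (j m)) x
      linarith [hlt _ hm']
    exact ⟨hx.not_isPadicLiouville, hnint.mono fun m h =>
      iff_of_false (fun ⟨n, hn⟩ => hx.ne_intCast n hn) h⟩

end Matching

/-- If `A` and `B` are weakly equivalent and `A` is p-adic
non-Liouville, then there are Liouville partitions `A = A₁ ∪ A₂` and `B = B₁ ∪ B₂` with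
(a) `A₁, B₁` consisting entirely of integers, and (b) `A₂, B₂` weakly equivalent and
containing no integers and no p-adic Liouville numbers.  In particular `B` is also
p-adic non-Liouville. -/
theorem weaklyEquivalent_nonLiouville_split
    (p : ℕ) [Fact p.Prime] (A B : Multiset ℤ_[p])
    (h : WeaklyEquivalent p A B)
    (hA : PadicNonLiouvilleMultiset p A) :
    ∃ A1 A2 B1 B2 : Multiset ℤ_[p],
      IsLiouvillePartition p A ![A1, A2] ∧
      IsLiouvillePartition p B ![B1, B2] ∧
      (∀ x ∈ A1, ∃ n : ℤ, x = (n : ℤ_[p])) ∧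
      (∀ x ∈ B1, ∃ n : ℤ, x = (n : ℤ_[p])) ∧
      WeaklyEquivalent p A2 B2 ∧
      (∀ x ∈ A2, (¬ ∃ n : ℤ, x = (n : ℤ_[p])) ∧ ¬ IsPadicLiouville p x) ∧
      (∀ x ∈ B2, (¬ ∃ n : ℤ, x = (n : ℤ_[p])) ∧ ¬ IsPadicLiouville p x) ∧
      PadicNonLiouvilleMultiset p B := by
  classical
  obtain ⟨n, a, b, c, rfl, rfl, -, hab⟩ := h
  obtain ⟨σ, hσ⟩ : ∃ σ : ℕ → Equiv.Perm (Fin n),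
      ∀ᶠ m in atTop, ∀ i, (padicDist p m (a (σ m i) - b i) : ℝ) ≤ c * m :=
    ⟨fun m => if hm : 1 ≤ m then (hab m hm).choose else 1,
      (eventually_ge_atTop 1).mono fun m hm => by simpa [hm] using (hab m hm).choose_spec⟩
  have hb (i : Fin n) := not_isPadicLiouville_and_eventually_int_iff
    (fun j => hA (a j) (by simp)) (j := fun m => σ m i) (hσ.mono fun m hm => hm i)
  have hB : PadicNonLiouvilleMultiset p (List.ofFn b) := by
    simpa [PadicNonLiouvilleMultiset] using fun i => (hb i).1
  have hweak : WeaklyEquivalent p ((List.ofFn a : Multiset ℤ_[p]).filter fun x => ¬ ∃ n : ℤ, x = n)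
      ((List.ofFn b : Multiset ℤ_[p]).filter fun x => ¬ ∃ n : ℤ, x = n) := by
    rw [Multiset.filter_ofFn_eq_map_univ, Multiset.filter_ofFn_eq_map_univ]
    exact weaklyEquivalent_of_eventually _ _ ((hσ.and (eventually_all.mpr fun i => (hb i).2)).mono
      fun m hm => ⟨(σ m).subtypeEquiv fun i => not_congr (hm.2 i), fun i => hm.1 i⟩)
  refine ⟨_, _, _, _, isLiouvillePartition_filter_int _ hA, isLiouvillePartition_filter_int _ hB,
    fun x hx => (Multiset.mem_filter.mp hx).2, fun x hx => (Multiset.mem_filter.mp hx).2, hweak,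
    fun x hx => ?_, fun x hx => ?_, hB⟩ <;> rw [Multiset.mem_filter] at hx
  exacts [⟨hx.2, hA x hx.1⟩, ⟨hx.2, hB x hx.1⟩]
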